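/- The function v₁₀(R) = R⁴/(4(1+R²)²) solves the inhomogeneous linearized equation with source R Φ'(R) + Φ(R): for all R > 0, v₁₀''(R) + v₁₀'(R)/R + (2/R²)(1 − 3Q(R)²) v₁₀(R) = R Φ'(R) + Φ(R). In particular, the solution remains bounded as R → ∞. -/

import Mathlib

/-! All functions involved are of the form `x ^ (n + 1) / (1 + x ^ 2) ^ m`, whose derivative is
again of this form, so once the derivatives are computed the equation is an identity of rational
functions. Boundedness is `R ^ 4 ≤ (1 + R ^ 2) ^ 2`, i.e. `v₁₀ ≤ 1/4`. -/

/-- The instanton `Q(R) = (1-R²)/(1+R²)`. -/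
noncomputable def Qinst (R : ℝ) : ℝ := (1 - R ^ 2) / (1 + R ^ 2)

/-- The zero mode `Φ(R) = R²/(1+R²)²`. -/
noncomputable def PhiYM (R : ℝ) : ℝ := R ^ 2 / (1 + R ^ 2) ^ 2

/-- The first correction `v₁₀(R) = R⁴/(4(1+R²)²)`. -/
noncomputable def v10 (R : ℝ) : ℝ := R ^ 4 / (4 * (1 + R ^ 2) ^ 2)

theorem hasDerivAt_pow_succ_div_one_add_sq_pow (n m : ℕ) (x : ℝ) :
    HasDerivAt (fun x : ℝ => x ^ (n + 1) / (1 + x ^ 2) ^ m)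
      (x ^ n * ((n + 1) + ((n + 1) - 2 * m) * x ^ 2) / (1 + x ^ 2) ^ (m + 1)) x := by
  have hpos : 0 < 1 + x ^ 2 := by positivity
  have hden : HasDerivAt (fun x : ℝ => 1 + x ^ 2) (2 * x) x := by
    simpa using (hasDerivAt_pow 2 x).const_add 1
  refine ((hasDerivAt_pow (n + 1) x).fun_div (hden.fun_pow m)
    (pow_pos hpos m).ne').congr_deriv ?_
  -- the chain rule produces the truncated exponent `m - 1`, hence the split on `m`
  rcases m with _ | m <;> simp only [Nat.add_sub_cancel] <;> field_simp <;> push_cast <;> ring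

theorem hasDerivAt_v10 (x : ℝ) : HasDerivAt v10 (x ^ 3 / (1 + x ^ 2) ^ 3) x := by
  have hv10 : v10 = fun x => (x ^ 4 / (1 + x ^ 2) ^ 2) / 4 := by
    funext x
    rw [v10, div_div, mul_comm]
  rw [hv10]
  refine ((hasDerivAt_pow_succ_div_one_add_sq_pow 3 2 x).div_const 4).congr_deriv ?_
  push_cast
  ring

theorem deriv_v10 : deriv v10 = fun x => x ^ 3 / (1 + x ^ 2) ^ 3 :=
  funext fun x => (hasDerivAt_v10 x).deriv

theorem deriv_deriv_v10 (x : ℝ) :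
    deriv (deriv v10) x = 3 * x ^ 2 * (1 - x ^ 2) / (1 + x ^ 2) ^ 4 := by
  rw [deriv_v10, (hasDerivAt_pow_succ_div_one_add_sq_pow 2 3 x).deriv]
  push_cast
  ring

theorem deriv_PhiYM (x : ℝ) : deriv PhiYM x = 2 * x * (1 - x ^ 2) / (1 + x ^ 2) ^ 3 := by
  rw [show PhiYM = fun x => x ^ (1 + 1) / (1 + x ^ 2) ^ 2 from rfl,
    (hasDerivAt_pow_succ_div_one_add_sq_pow 1 2 x).deriv]
  push_cast
  ring

theorem v10_nonneg (x : ℝ) : 0 ≤ v10 x := by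
  unfold v10
  positivity

theorem v10_le_quarter (x : ℝ) : v10 x ≤ 1 / 4 := by
  rw [v10, div_le_div_iff₀ (by positivity) (by norm_num)]
  nlinarith [sq_nonneg x]

theorem v10_solves_inhomogeneous :
    (∀ R : ℝ, 0 < R →
      deriv (deriv v10) R + deriv v10 R / R
        + (2 / R ^ 2) * (1 - 3 * (Qinst R) ^ 2) * v10 R
      = R * deriv PhiYM R + PhiYM R) ∧
    ∃ M : ℝ, ∀ R : ℝ, 0 < R → |v10 R| ≤ M := by
  refine ⟨fun R hR => ?_, 1 / 4, fun R _ => ?_⟩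
  · rw [deriv_deriv_v10, deriv_v10, deriv_PhiYM, Qinst, PhiYM, v10]
    field_simp
    ring
  · rw [abs_of_nonneg (v10_nonneg R)]
    exact v10_le_quarter R
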